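/- arXiv:1504.01014 — 7 statements merged into one kernel-verified Lean document; each statement's English description precedes it below -/
import Mathlib

section
/- Let G be a finite abelian group, let Ĝ denote its group of (additive) characters, and let F be the unitary Fourier transform defined by (Fx)(χ) := (1/√|G|)·Σ_{g∈G} x(g)·conj(χ(g)) for x : G → ℂ and χ ∈ Ĝ. Then for every nonzero function x : G → ℂ, one has ‖x‖₀ · ‖Fx‖₀ ≥ |G|. -/
/-!
Plancherel gives `‖Fx‖₂ = ‖x‖₂`, while the triangle inequality bounds every `|Fx χ|` by
`‖x‖₁ / √|G|`, and Cauchy–Schwarz on the support of `x` gives `‖x‖₁² ≤ ‖x‖₀ ‖x‖₂²`.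
Summing the squared pointwise bound over the support of `Fx` yields
`‖x‖₂² ≤ ‖Fx‖₀ ‖x‖₀ ‖x‖₂² / |G|`, and `‖x‖₂ > 0` since `x ≠ 0`.
-/

open scoped BigOperators

/-- Number of nonzero entries ("0-norm"). -/
noncomputable def norm0 {N : Type*} (x : N → ℂ) : ℕ := Nat.card {i // x i ≠ 0}

/-- The 1-norm. -/
noncomputable def norm1 {N : Type*} [Fintype N] (x : N → ℂ) : ℝ := ∑ i, ‖x i‖

/-- The squared 2-norm. -/
noncomputable def norm2sq {N : Type*} [Fintype N] (x : N → ℂ) : ℝ := ∑ i, ‖x i‖ ^ 2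

/-- Numerical sparsity: `ns x = ‖x‖₁² / ‖x‖₂²`. -/
noncomputable def ns {N : Type*} [Fintype N] (x : N → ℂ) : ℝ := norm1 x ^ 2 / norm2sq x

/-- The unitary discrete Fourier transform on `ℂ^(ZMod n)`. -/
noncomputable def dft (n : ℕ) [NeZero n] (x : ZMod n → ℂ) : ZMod n → ℂ := fun k =>
  (1 / Real.sqrt n : ℝ) *
    ∑ j : ZMod n, x j *
      Complex.exp (-(2 * (Real.pi : ℂ) * Complex.I * (j.val : ℂ) * (k.val : ℂ)) / (n : ℂ))

open Finset
open scoped ComplexConjugate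

section Support

variable {ι : Type*} [Fintype ι]

open scoped Classical in
theorem norm0_eq_card_filter (x : ι → ℂ) :
    norm0 x = #{i | x i ≠ 0} := by
  rw [norm0, Nat.card_eq_fintype_card, Fintype.card_subtype]

theorem sum_filter_ne_zero_comp {M N : Type*} [Zero M] [AddCommMonoid N] [DecidableEq M]
    (x : ι → M) (f : M → N) (hf : f 0 = 0) :
    ∑ i ∈ {i | x i ≠ 0}, f (x i) = ∑ i, f (x i) :=
  sum_filter_of_ne fun i _ hi h0 => hi (by rw [h0, hf])

theorem norm1_sq_le_norm0_mul_norm2sq (x : ι → ℂ) :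
    norm1 x ^ 2 ≤ norm0 x * norm2sq x := by
  classical
  calc norm1 x ^ 2 = (∑ i ∈ {i | x i ≠ 0}, ‖x i‖) ^ 2 := by
        rw [norm1, sum_filter_ne_zero_comp x (‖·‖) norm_zero]
    _ ≤ #{i | x i ≠ 0} * ∑ i ∈ {i | x i ≠ 0}, ‖x i‖ ^ 2 := sq_sum_le_card_mul_sum_sq
    _ = norm0 x * norm2sq x := by
        rw [norm0_eq_card_filter, norm2sq, sum_filter_ne_zero_comp x (‖·‖ ^ 2) (by simp)]

theorem norm2sq_le_norm0_mul_sq (y : ι → ℂ) {M : ℝ} (hy : ∀ i, ‖y i‖ ≤ M) :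
    norm2sq y ≤ norm0 y * M ^ 2 := by
  classical
  rw [norm2sq, ← sum_filter_ne_zero_comp y (‖·‖ ^ 2) (by simp), norm0_eq_card_filter,
    ← nsmul_eq_mul]
  exact sum_le_card_nsmul _ _ _ fun i _ => pow_le_pow_left₀ (norm_nonneg _) (hy i) 2

theorem norm2sq_pos {x : ι → ℂ} (hx : x ≠ 0) : 0 < norm2sq x := by
  obtain ⟨i, hi⟩ := Function.ne_iff.mp hx
  exact sum_pos' (fun j _ => by positivity) ⟨i, mem_univ i, pow_pos (norm_pos_iff.mpr hi) 2⟩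

end Support

namespace AddChar

variable {G : Type*} [AddCommGroup G] [Fintype G]

theorem sum_conj_apply_mul_apply [DecidableEq G] (g h : G) :
    ∑ χ : AddChar G ℂ, conj (χ g) * χ h = if g = h then (Fintype.card G : ℂ) else 0 := by
  have hχ (χ : AddChar G ℂ) : conj (χ g) * χ h = χ (h - g) := by
    rw [← inv_apply_eq_conj, ← map_neg_eq_inv, mul_comm, ← map_add_eq_mul, sub_eq_add_neg]
  simp only [hχ, sum_apply_eq_ite, sub_eq_zero, eq_comm]

theorem sum_sq_norm_sum_mul_conj (x : G → ℂ) :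
    ∑ χ : AddChar G ℂ, ‖∑ g, x g * conj (χ g)‖ ^ 2 = Fintype.card G * ∑ g, ‖x g‖ ^ 2 := by
  classical
  apply Complex.ofReal_injective
  push_cast
  simp_rw [← Complex.mul_conj']
  calc ∑ χ : AddChar G ℂ, (∑ g, x g * conj (χ g)) * conj (∑ h, x h * conj (χ h))
      = ∑ χ : AddChar G ℂ, ∑ g, ∑ h, x g * conj (x h) * (conj (χ g) * χ h) := by
        simp only [map_sum, map_mul, Complex.conj_conj, sum_mul_sum]
        exact sum_congr rfl fun χ _ => sum_congr rfl fun g _ => sum_congr rfl fun h _ => by ring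
    _ = ∑ g, ∑ h, x g * conj (x h) * ∑ χ : AddChar G ℂ, conj (χ g) * χ h := by
        rw [sum_comm]
        simp only [mul_sum]
        exact sum_congr rfl fun g _ => sum_comm
    _ = Fintype.card G * ∑ g, x g * conj (x g) := by
        simp only [sum_conj_apply_mul_apply, mul_ite, mul_zero, sum_ite_eq, mem_univ, if_true,
          mul_sum]
        exact sum_congr rfl fun g _ => mul_comm _ _

theorem norm_sum_mul_conj_le (x : G → ℂ) (χ : AddChar G ℂ) :
    ‖∑ g, x g * conj (χ g)‖ ≤ ∑ g, ‖x g‖ :=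
  (norm_sum_le _ _).trans_eq <| by simp only [norm_mul, Complex.norm_conj, norm_apply, mul_one]

noncomputable def unitaryFourier (x : G → ℂ) (χ : AddChar G ℂ) : ℂ :=
  (1 / Real.sqrt (Fintype.card G) : ℝ) * ∑ g, x g * conj (χ g)

theorem norm2sq_unitaryFourier (x : G → ℂ) : norm2sq (unitaryFourier x) = norm2sq x := by
  have hn : (Fintype.card G : ℝ) ≠ 0 := Nat.cast_ne_zero.mpr Fintype.card_ne_zero
  simp only [norm2sq, unitaryFourier, norm_mul, Complex.norm_real, Real.norm_eq_abs, mul_pow,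
    sq_abs, ← mul_sum, sum_sq_norm_sum_mul_conj, div_pow, one_pow, Real.sq_sqrt (Nat.cast_nonneg _)]
  field_simp

theorem norm_unitaryFourier_le (x : G → ℂ) (χ : AddChar G ℂ) :
    ‖unitaryFourier x χ‖ ≤ norm1 x / Real.sqrt (Fintype.card G) := by
  rw [unitaryFourier, norm1, norm_mul, Complex.norm_real, Real.norm_of_nonneg (by positivity),
    one_div_mul_eq_div]
  gcongr
  exact norm_sum_mul_conj_le x χ

end AddChar

/-- Donoho–Stark / Tao multiplicative uncertainty principle for finite abelian groups:
for the unitary Fourier transform `F` on a finite abelian group `G` (with character group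
`AddChar G ℂ`), every nonzero `x : G → ℂ` satisfies `‖x‖₀ · ‖Fx‖₀ ≥ |G|`. -/
theorem multiplicative_uncertainty_finite_abelian (G : Type*) [AddCommGroup G] [Fintype G]
    (x : G → ℂ) (hx : x ≠ 0) (Fx : AddChar G ℂ → ℂ)
    (hFx : ∀ χ : AddChar G ℂ,
      Fx χ = (1 / Real.sqrt (Fintype.card G) : ℝ) * ∑ g, x g * (starRingEnd ℂ) (χ g)) :
    Fintype.card G ≤ norm0 x * norm0 Fx := by
  obtain rfl : Fx = AddChar.unitaryFourier x := funext hFx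
  set n := Fintype.card G
  have hn : (0 : ℝ) < n := by exact_mod_cast Fintype.card_pos
  have key : (n : ℝ) * norm2sq x ≤ (norm0 x * norm0 (AddChar.unitaryFourier x) : ℕ) * norm2sq x :=
    calc (n : ℝ) * norm2sq x
        = n * norm2sq (AddChar.unitaryFourier x) := by rw [AddChar.norm2sq_unitaryFourier]
      _ ≤ n * (norm0 (AddChar.unitaryFourier x) * (norm1 x / Real.sqrt n) ^ 2) := by
          gcongr
          exact norm2sq_le_norm0_mul_sq _ (AddChar.norm_unitaryFourier_le x)
      _ = norm0 (AddChar.unitaryFourier x) * norm1 x ^ 2 := by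
          rw [div_pow, Real.sq_sqrt hn.le]
          field_simp
      _ ≤ norm0 (AddChar.unitaryFourier x) * (norm0 x * norm2sq x) := by
          gcongr
          exact norm1_sq_le_norm0_mul_norm2sq x
      _ = _ := by push_cast; ring
  exact_mod_cast le_of_mul_le_mul_right key (norm2sq_pos hx)
end

section
/- Let p be a prime number and let F : ℂ^(ZMod p) → ℂ^(ZMod p) be the unitary discrete Fourier transform. Then for every nonzero x ∈ ℂ^(ZMod p), one has ‖x‖₀ + ‖Fx‖₀ ≥ p + 1. -/
open scoped BigOperators

/-!
Chebotarev's theorem: for `p` prime, every square minor of the Fourier matrix `(ζ ^ (j * k))` is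
nonzero. It suffices to prove this in `ℤ[ζ] = ℤ[t]/(Φ_p)`. A kernel vector there can be scaled so
that some entry `w_j` is not divisible by `t - 1`; then `f = ∑ w_j X ^ a_j` has the distinct roots
`t ^ b_i`, and reducing modulo `t - 1` (residue field `𝔽_p`, `t ↦ 1`) gives a nonzero polynomial of
degree `< p` with at most `|ι|` terms, divisible by `(X - 1) ^ |ι|`. That is impossible, because
differentiation lowers both the number of terms and the order of vanishing at `1` by one.

If `‖x‖₀ + ‖Fx‖₀ ≤ p`, the support of `x` injects into the zero set of `Fx`, and `x` restricted
to its support is a kernel vector of the corresponding minor.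
-/

open Polynomial Finset

namespace Polynomial

variable {R ι : Type*} [Semiring R] [Fintype ι]

theorem coeff_sum_C_mul_X_pow_of_injective {a : ι → ℕ} (ha : Function.Injective a) (c : ι → R)
    (j : ι) : (∑ i, C (c i) * X ^ a i).coeff (a j) = c j := by
  classical
  simp [finsetSum_coeff, ha.eq_iff]

theorem card_support_sum_C_mul_X_pow_le (c : ι → R) (a : ι → ℕ) :
    #(∑ i, C (c i) * X ^ a i).support ≤ Fintype.card ι := by
  classical
  calc #(∑ i, C (c i) * X ^ a i).support ≤ #(univ.image a) := card_le_card fun n hn => by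
        by_contra h
        refine mem_support_iff.1 hn ?_
        simp only [finsetSum_coeff, coeff_C_mul_X_pow]
        exact sum_eq_zero fun i _ =>
          if_neg fun hni : n = a i => h (hni ▸ mem_image_of_mem a (mem_univ i))
    _ ≤ Fintype.card ι := card_image_le

theorem natDegree_sum_C_mul_X_pow_le (c : ι → R) (a : ι → ℕ) {d : ℕ} (had : ∀ i, a i ≤ d) :
    (∑ i, C (c i) * X ^ a i).natDegree ≤ d :=
  natDegree_sum_le_of_forall_le _ _ fun i _ => (natDegree_C_mul_X_pow_le _ _).trans (had i)

theorem card_support_X_mul (g : R[X]) : #(X * g).support = #g.support := by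
  have : (X * g).support = g.support.map (addRightEmbedding 1) := by
    ext (_ | n) <;> simp [coeff_X_mul]
  rw [this, card_map]

section CommRing

variable {R : Type*} [CommRing R] [IsDomain R] {p : ℕ}

theorem map_support_derivative [CharP R p] {g : R[X]} (hdeg : g.natDegree < p) :
    (derivative g).support.map (addRightEmbedding 1) = g.support.erase 0 := by
  ext (_ | n)
  · simp
  · simp only [mem_map, mem_support_iff, coeff_derivative, addRightEmbedding_apply, mem_erase,
      Nat.add_right_cancel_iff, exists_eq_right, ne_eq, Nat.succ_ne_zero, not_false_eq_true,
      true_and, mul_eq_zero, not_or, and_iff_left_iff_imp]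
    intro hn
    have := le_natDegree_of_ne_zero hn
    exact_mod_cast (CharP.cast_eq_zero_iff R p (n + 1)).not.2
      (Nat.not_dvd_of_pos_of_lt n.succ_pos (by omega))

theorem lt_card_support_of_X_sub_one_pow_dvd [CharP R p] {g : R[X]} (hg : g ≠ 0)
    (hdeg : g.natDegree < p) {k : ℕ} (hk : (X - 1) ^ k ∣ g) : k < #g.support := by
  induction hn : g.natDegree using Nat.strong_induction_on generalizing g k with
  | _ n ih =>
  rcases k with _ | k
  · exact card_pos.2 (support_nonempty.2 hg)
  by_cases h0 : g.coeff 0 = 0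
  · obtain ⟨h, rfl⟩ := X_dvd_iff.2 h0
    have hh : h ≠ 0 := right_ne_zero_of_mul hg
    rw [natDegree_X_mul hh] at hdeg hn
    have hcop : IsCoprime ((X - 1 : R[X]) ^ (k + 1)) X := IsCoprime.pow_left ⟨-1, 1, by ring⟩
    rw [card_support_X_mul]
    exact ih _ (by omega) hh (by omega) (hcop.dvd_of_dvd_mul_left hk) rfl
  · have hg1 : g.natDegree ≠ 0 := fun hg0 => h0 <| by
      have h1 : g.eval 1 = 0 :=
        eval_eq_zero_of_dvd_of_eval_eq_zero ((dvd_pow_self _ k.succ_ne_zero).trans hk) (by simp)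
      rwa [eq_C_of_natDegree_eq_zero hg0, eval_C] at h1
    have hsupp := map_support_derivative hdeg
    have hg' : derivative g ≠ 0 := fun hz => by
      have : g.natDegree ∈ g.support.erase 0 :=
        mem_erase.2 ⟨hg1, natDegree_mem_support_of_nonzero hg⟩
      simp [← hsupp, hz] at this
    have hlt := natDegree_derivative_lt hg1
    have := ih _ (hn ▸ hlt) hg' (by omega) (pow_sub_one_dvd_derivative_of_pow_dvd hk) rfl
    have hcard := congrArg card hsupp
    rw [card_map, card_erase_of_mem (mem_support_iff.2 h0)] at hcard
    omega

theorem lt_card_support_map_of_isRoot {K : Type*} [CommRing K] [IsDomain K] [CharP K p]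
    (φ : R →+* K) {f : R[X]} {s : Finset R}
    (hs : ∀ r ∈ s, f.IsRoot r ∧ φ r = 1) (hf : f.map φ ≠ 0) (hdeg : (f.map φ).natDegree < p) :
    #s < #(f.map φ).support := by
  have hf0 : f ≠ 0 := fun h => hf (by rw [h, Polynomial.map_zero])
  have hdvd : ∏ r ∈ s, (X - C r) ∣ f :=
    (Multiset.prod_X_sub_C_dvd_iff_le_roots hf0 s.val).2 <|
      (Multiset.le_iff_subset s.nodup).2 fun r hr => (mem_roots hf0).2 (hs r hr).1
  have hmap : (∏ r ∈ s, (X - C r)).map φ = (X - 1) ^ #s := by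
    rw [Polynomial.map_prod, ← prod_const]
    exact prod_congr rfl fun r hr => by simp [(hs r hr).2]
  exact lt_card_support_of_X_sub_one_pow_dvd hf hdeg (hmap ▸ Polynomial.map_dvd φ hdvd)

end CommRing

end Polynomial

theorem exists_eq_pow_mul_and_not_dvd {M ι : Type*} [CommMonoidWithZero M] [IsCancelMulZero M]
    [WfDvdMonoid M] {π : M} (hπ : ¬IsUnit π) {v : ι → M} (hv : v ≠ 0) :
    ∃ (k : ℕ) (w : ι → M), (∀ j, v j = π ^ k * w j) ∧ ∃ j, ¬π ∣ w j := by
  classical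
  have hex : ∃ k, ∃ j, ¬π ^ (k + 1) ∣ v j := by
    obtain ⟨j, hj⟩ := Function.ne_iff.1 hv
    obtain ⟨k, hk⟩ := FiniteMultiplicity.of_not_isUnit hπ hj
    exact ⟨k, j, hk⟩
  have hdvd : ∀ j, π ^ Nat.find hex ∣ v j := by
    rcases h : Nat.find hex with _ | k
    · simp
    · simpa using Nat.find_min hex (h ▸ k.lt_succ_self)
  choose w hw using hdvd
  obtain ⟨j, hj⟩ := Nat.find_spec hex
  refine ⟨Nat.find hex, w, hw, j, fun hπw => hj ?_⟩
  rw [hw j, pow_succ]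
  exact mul_dvd_mul_left _ hπw

theorem AdjoinRoot.root_sub_dvd_mk_sub_eval {R : Type*} [CommRing R] (f g : R[X]) (a : R) :
    root f - of f a ∣ mk f g - of f (g.eval a) := by
  obtain ⟨q, hq⟩ := X_sub_C_dvd_sub_C_eval (a := a) (p := g)
  exact ⟨mk f q, by simpa using congrArg (mk f) hq⟩

namespace Chebotarev

variable (p : ℕ) [hp : Fact p.Prime]

local notation "𝒪" => AdjoinRoot (cyclotomic p ℤ)

local notation "t" => AdjoinRoot.root (cyclotomic p ℤ)

instance : IsDomain 𝒪 :=
  AdjoinRoot.isDomain_of_prime <|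
    UniqueFactorizationMonoid.irreducible_iff_prime.1 (cyclotomic.irreducible hp.out.pos)

noncomputable def toZMod : 𝒪 →+* ZMod p :=
  AdjoinRoot.lift (Int.castRingHom (ZMod p)) 1 (by simp [eval₂_at_one, eval_one_cyclotomic_prime])

theorem toZMod_mk (g : ℤ[X]) : toZMod p (AdjoinRoot.mk _ g) = ((g.eval 1 : ℤ) : ZMod p) := by
  rw [toZMod, AdjoinRoot.lift_mk, eval₂_at_one]
  rfl

theorem toZMod_root : toZMod p t = 1 := AdjoinRoot.lift_root _

theorem root_sub_one_dvd_of_toZMod_eq_zero {z : 𝒪} (hz : toZMod p z = 0) : t - 1 ∣ z := by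
  obtain ⟨g, rfl⟩ := AdjoinRoot.mk_surjective z
  rw [toZMod_mk, ZMod.intCast_zmod_eq_zero_iff_dvd] at hz
  obtain ⟨m, hm⟩ := hz
  have hpdvd : t - 1 ∣ (p : 𝒪) := by
    simpa [eval_one_cyclotomic_prime] using
      AdjoinRoot.root_sub_dvd_mk_sub_eval (cyclotomic p ℤ) (cyclotomic p ℤ) 1
  simpa [hm] using
    (AdjoinRoot.root_sub_dvd_mk_sub_eval (cyclotomic p ℤ) g 1).add (hpdvd.mul_right m)

theorem not_isUnit_root_sub_one : ¬IsUnit (t - 1) := fun h => by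
  simpa [toZMod_root] using h.map (toZMod p)

section Embedding

variable {K : Type*} [Field K] {ζ : K} (hζ : IsPrimitiveRoot ζ p)

noncomputable def toField : 𝒪 →+* K :=
  AdjoinRoot.lift (Int.castRingHom K) ζ <| by
    rw [eval₂_eq_eval_map, map_cyclotomic_int]
    exact hζ.isRoot_cyclotomic hp.out.pos

theorem toField_root : toField p hζ t = ζ := AdjoinRoot.lift_root _

theorem toField_injective [CharZero K] : Function.Injective (toField p hζ) := by
  refine (injective_iff_map_eq_zero _).2 fun z hz => ?_
  obtain ⟨g, rfl⟩ := AdjoinRoot.mk_surjective z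
  rw [toField, AdjoinRoot.lift_mk] at hz
  refine AdjoinRoot.mk_eq_zero.2 ?_
  rw [cyclotomic_eq_minpoly hζ hp.out.pos]
  exact minpoly.isIntegrallyClosed_dvd (hζ.isIntegral hp.out.pos) hz

end Embedding

theorem isPrimitiveRoot_root : IsPrimitiveRoot t p := by
  have hζ := Complex.isPrimitiveRoot_exp p hp.out.ne_zero
  refine IsPrimitiveRoot.of_map_of_injective (f := toField p hζ) ?_ (toField_injective p hζ)
  rwa [toField_root]

theorem root_sub_one_ne_zero : (t - 1 : 𝒪) ≠ 0 :=
  sub_ne_zero.2 ((isPrimitiveRoot_root p).ne_one hp.out.one_lt)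

variable {ι : Type*} [Fintype ι] {a b : ι → ZMod p}

theorem root_sub_one_dvd_of_sum_eq_zero (ha : Function.Injective a) (hb : Function.Injective b)
    {w : ι → 𝒪} (hw : ∀ i, ∑ j, t ^ ((b i).val * (a j).val) * w j = 0) (j₀ : ι) :
    t - 1 ∣ w j₀ := by
  classical
  by_contra hj₀
  set f : 𝒪[X] := ∑ j, C (w j) * X ^ (a j).val
  have hfmap : f.map (toZMod p) = ∑ j, C (toZMod p (w j)) * X ^ (a j).val := by
    simp [f, Polynomial.map_sum]
  have hf₀ : (f.map (toZMod p)).coeff (a j₀).val ≠ 0 := by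
    rw [hfmap, coeff_sum_C_mul_X_pow_of_injective (a := fun j => (a j).val)
      ((ZMod.val_injective p).comp ha)]
    exact fun h => hj₀ (root_sub_one_dvd_of_toZMod_eq_zero p h)
  have hdeg : (f.map (toZMod p)).natDegree < p := by
    rw [hfmap]
    exact (natDegree_sum_C_mul_X_pow_le _ _ fun j => Nat.le_sub_one_of_lt (ZMod.val_lt _)).trans_lt
      (Nat.sub_lt hp.out.pos one_pos)
  have hroots : ∀ r ∈ univ.image fun i => t ^ (b i).val, f.IsRoot r ∧ toZMod p r = 1 := by
    simp only [mem_image, mem_univ, true_and, forall_exists_index, forall_apply_eq_imp_iff]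
    refine fun i => ⟨?_, by simp [toZMod_root]⟩
    rw [IsRoot.def, ← hw i, eval_finsetSum]
    exact sum_congr rfl fun j _ => by rw [eval_mul, eval_C, eval_pow, eval_X, ← pow_mul, mul_comm]
  have hlt := lt_card_support_map_of_isRoot (toZMod p) hroots (fun h => by simp [h] at hf₀) hdeg
  have hle := card_support_sum_C_mul_X_pow_le (fun j => toZMod p (w j)) fun j => (a j).val
  rw [← hfmap] at hle
  rw [card_image_of_injective _ fun i j hij => hb <| ZMod.val_injective p <|
    (isPrimitiveRoot_root p).pow_inj (ZMod.val_lt _) (ZMod.val_lt _) hij, card_univ] at hlt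
  omega

variable [DecidableEq ι]

theorem det_root_pow_ne_zero (ha : Function.Injective a) (hb : Function.Injective b) :
    (Matrix.of fun i j => t ^ ((b i).val * (a j).val) : Matrix ι ι 𝒪).det ≠ 0 := by
  intro hdet
  obtain ⟨v, hv, hMv⟩ := Matrix.exists_mulVec_eq_zero_iff.2 hdet
  obtain ⟨k, w, hvw, j₀, hj₀⟩ := exists_eq_pow_mul_and_not_dvd (not_isUnit_root_sub_one p) hv
  refine hj₀ (root_sub_one_dvd_of_sum_eq_zero p ha hb (fun i => ?_) j₀)
  have h : (t - 1) ^ k * ∑ j, t ^ ((b i).val * (a j).val) * w j = 0 := by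
    have hMvi := congrFun hMv i
    simp only [Matrix.mulVec, dotProduct, Matrix.of_apply, Pi.zero_apply] at hMvi
    rw [mul_sum, ← hMvi]
    exact sum_congr rfl fun j _ => by rw [hvw, mul_left_comm]
  exact (mul_eq_zero.1 h).resolve_left (pow_ne_zero _ (root_sub_one_ne_zero p))

theorem det_pow_ne_zero_of_isPrimitiveRoot {K : Type*} [Field K] [CharZero K] {ζ : K}
    (hζ : IsPrimitiveRoot ζ p) (ha : Function.Injective a) (hb : Function.Injective b) :
    (Matrix.of fun i j => ζ ^ ((b i).val * (a j).val) : Matrix ι ι K).det ≠ 0 := by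
  have hmap : (Matrix.of fun i j => t ^ ((b i).val * (a j).val)).map (toField p hζ) =
      Matrix.of fun i j => ζ ^ ((b i).val * (a j).val) := by
    ext i j
    simp [toField_root]
  rw [← hmap, ← RingHom.mapMatrix_apply, ← RingHom.map_det,
    map_ne_zero_iff _ (toField_injective p hζ)]
  exact det_root_pow_ne_zero p ha hb

end Chebotarev

theorem sum_exp_pow_mul_eq_zero_of_dft_eq_zero {n : ℕ} [NeZero n] {x : ZMod n → ℂ} {k : ZMod n}
    (hk : dft n x k = 0) :
    ∑ j, Complex.exp (-(2 * Real.pi * Complex.I / n)) ^ (k.val * j.val) * x j = 0 := by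
  have hn : ((1 / Real.sqrt n : ℝ) : ℂ) ≠ 0 := by
    have : (0 : ℝ) < n := Nat.cast_pos.2 (NeZero.pos n)
    exact_mod_cast (one_div_pos.2 (Real.sqrt_pos.2 this)).ne'
  rw [dft, mul_eq_zero] at hk
  rw [← hk.resolve_left hn]
  refine sum_congr rfl fun j _ => ?_
  rw [← Complex.exp_nat_mul, mul_comm]
  push_cast
  ring_nf

section

variable {p : ℕ} [Fact p.Prime] {x : ZMod p → ℂ}

theorem eq_zero_of_support_embedding_zeros_dft (e : {j // x j ≠ 0} ↪ {k // dft p x k = 0}) :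
    x = 0 := by
  classical
  have hζ : IsPrimitiveRoot (Complex.exp (-(2 * Real.pi * Complex.I / p))) p := by
    rw [Complex.exp_neg]
    exact (Complex.isPrimitiveRoot_exp p (NeZero.ne p)).inv
  by_contra hx
  refine Chebotarev.det_pow_ne_zero_of_isPrimitiveRoot p hζ Subtype.val_injective
    (Subtype.val_injective.comp e.injective)
    (Matrix.exists_mulVec_eq_zero_iff.1 ⟨fun j => x j, ?_, ?_⟩)
  · obtain ⟨j, hj⟩ := Function.ne_iff.1 hx
    exact Function.ne_iff.2 ⟨⟨j, hj⟩, hj⟩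
  · funext i
    refine Eq.trans ?_ (sum_exp_pow_mul_eq_zero_of_dft_eq_zero (e i).2)
    simp only [Matrix.mulVec, dotProduct, Matrix.of_apply, Function.comp_apply]
    rw [← sum_filter_of_ne (p := fun j => x j ≠ 0) fun j _ h => right_ne_zero_of_mul h,
      ← sum_subtype_eq_sum_filter, subtype_univ]

end

/-- Tao's additive uncertainty principle: if `p` is prime, then every nonzero
`x ∈ ℂ^(ZMod p)` satisfies `‖x‖₀ + ‖Fx‖₀ ≥ p + 1`. -/
theorem additive_uncertainty_prime (p : ℕ) [hp : Fact p.Prime]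
    (x : ZMod p → ℂ) (hx : x ≠ 0) :
    p + 1 ≤ norm0 x + norm0 (dft p x) := by
  classical
  by_contra! hlt
  simp only [norm0, Nat.card_eq_fintype_card] at hlt
  obtain ⟨e⟩ : Nonempty ({j // x j ≠ 0} ↪ {k // dft p x k = 0}) := by
    refine Function.Embedding.nonempty_of_card_le ?_
    have hcompl := Fintype.card_subtype_compl (fun k => dft p x k = 0)
    have hle := Fintype.card_subtype_le (fun k => dft p x k = 0)
    simp only [ne_eq, ZMod.card] at hlt hcompl hle ⊢
    omega
  exact hx (eq_zero_of_support_embedding_zeros_dft e)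
end

section
/- Let Φ be an m×N complex matrix whose columns all have unit 2-norm, and suppose Φ exhibits (k,θ)-restricted orthogonality for some k ≥ 1 and θ ≥ 0. Then Φ satisfies the (k,δ)-restricted isometry property with δ = 2θ. -/
/-!
Put `H = Φᴴ Φ - 1`, so that `‖Φx‖² - ‖x‖² = x* H x`; unit columns make the diagonal of `H`
vanish. Every off-diagonal pair `(a, b)` satisfies `a ∈ A, b ∉ A` for exactly a quarter of the
`2^N` subsets `A`, so `x* H x` is four times the average of the cut forms `x_A* H x_Aᶜ`. On a
cut, `H` agrees with `Φᴴ Φ`, so restricted orthogonality bounds each cut form by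
`θ ‖x_A‖ ‖x_Aᶜ‖ ≤ θ ‖x‖² / 2`, whence `|‖Φx‖² - ‖x‖²| ≤ 2θ ‖x‖²`.
-/

open scoped BigOperators

/-- `Φ` exhibits `(k,θ)`-restricted orthogonality: `|⟨Φx,Φy⟩| ≤ θ‖x‖₂‖y‖₂` for all
`k`-sparse `x, y` with disjoint supports. -/
def RestrictedOrthogonality {M N : Type*} [Fintype M] [Fintype N]
    (Φ : Matrix M N ℂ) (k : ℕ) (θ : ℝ) : Prop :=
  ∀ x y : N → ℂ, norm0 x ≤ k → norm0 y ≤ k → (∀ i, x i = 0 ∨ y i = 0) →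
    ‖∑ i, (starRingEnd ℂ) (Φ.mulVec x i) * Φ.mulVec y i‖ ≤
      θ * Real.sqrt (norm2sq x) * Real.sqrt (norm2sq y)

/-- `Φ` satisfies the `(k,δ)`-restricted isometry property:
`(1−δ)‖x‖₂² ≤ ‖Φx‖₂² ≤ (1+δ)‖x‖₂²` for all `k`-sparse `x`. -/
def RIP {M N : Type*} [Fintype M] [Fintype N] (Φ : Matrix M N ℂ) (k : ℕ) (δ : ℝ) : Prop :=
  ∀ x : N → ℂ, norm0 x ≤ k →
    (1 - δ) * norm2sq x ≤ norm2sq (Φ.mulVec x) ∧ norm2sq (Φ.mulVec x) ≤ (1 + δ) * norm2sq x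

open Finset Matrix

section

variable {N : Type*} [Fintype N]

lemma norm2sq_nonneg (x : N → ℂ) : 0 ≤ norm2sq x :=
  sum_nonneg fun _ _ => sq_nonneg _

lemma ofReal_norm2sq (x : N → ℂ) : (norm2sq x : ℂ) = star x ⬝ᵥ x := by
  simp [norm2sq, dotProduct, Complex.conj_mul']

lemma conjTranspose_mul_self_apply_self {M : Type*} (Φ : Matrix N M ℂ) (j : M) :
    (Φᴴ * Φ) j j = norm2sq fun i => Φ i j := by
  rw [ofReal_norm2sq]
  rfl

lemma norm0_indicator_le (s : Set N) (x : N → ℂ) : norm0 (s.indicator x) ≤ norm0 x :=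
  Nat.card_mono (Set.toFinite _) fun _ hi => (Set.indicator_apply_ne_zero.mp hi).2

lemma norm2sq_indicator_add_compl (s : Set N) (x : N → ℂ) :
    norm2sq (s.indicator x) + norm2sq (sᶜ.indicator x) = norm2sq x := by
  rw [norm2sq, norm2sq, norm2sq, ← sum_add_distrib]
  refine sum_congr rfl fun i _ => ?_
  by_cases hi : i ∈ s <;> simp [hi]

section Cuts

variable [DecidableEq N]

lemma four_mul_card_filter_mem_notMem {a b : N} (hab : a ≠ b) :
    4 * #{A : Finset N | a ∈ A ∧ b ∉ A} = 2 ^ Fintype.card N := by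
  have himage : ({A : Finset N | a ∈ A ∧ b ∉ A} : Finset (Finset N))
      = (((univ.erase a).erase b).powerset).image (insert a) := by
    ext A
    simp only [mem_filter, mem_univ, true_and, mem_image, mem_powerset]
    constructor
    · rintro ⟨haA, hbA⟩
      refine ⟨A.erase a, fun i hi => ?_, insert_erase haA⟩
      simp only [mem_erase] at hi ⊢
      exact ⟨fun hib => hbA (hib ▸ hi.2), hi.1, mem_univ i⟩
    · rintro ⟨B, hB, rfl⟩
      refine ⟨mem_insert_self a B, fun hb => ?_⟩
      rcases mem_insert.mp hb with h | h
      · exact hab h.symm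
      · simpa using hB h
  have hinj : Set.InjOn (insert a) (((univ.erase a).erase b).powerset : Set (Finset N)) :=
    insert_erase_invOn.2.injOn.mono fun B hB =>
      show a ∉ B from fun ha => by simpa using mem_powerset.mp hB ha
  obtain ⟨n, hn⟩ : ∃ n, Fintype.card N = n + 2 :=
    ⟨Fintype.card N - 2, (Nat.sub_add_cancel (Fintype.one_lt_card_iff.mpr ⟨a, b, hab⟩)).symm⟩
  rw [himage, card_image_of_injOn hinj, card_powerset, card_erase_of_mem (by simp [hab.symm]),
    card_erase_of_mem (mem_univ a), card_univ, hn, show n + 2 - 1 - 1 = n by omega]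
  ring

variable {β : Type*} [AddCommMonoid β]

lemma sum_mem_sum_compl_eq_sum_sum_ite (f : N → N → β) (A : Finset N) :
    ∑ a ∈ A, ∑ b ∈ Aᶜ, f a b = ∑ a, ∑ b, if a ∈ A ∧ b ∉ A then f a b else 0 := by
  simp_rw [ite_and, sum_ite_irrel, sum_const_zero, ← mem_compl, sum_ite_mem_eq]

lemma four_nsmul_sum_sum_mem_sum_compl (f : N → N → β) (hf : ∀ a, f a a = 0) :
    4 • ∑ A : Finset N, ∑ a ∈ A, ∑ b ∈ Aᶜ, f a b = 2 ^ Fintype.card N • ∑ a, ∑ b, f a b := by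
  have hcount : ∑ A : Finset N, ∑ a ∈ A, ∑ b ∈ Aᶜ, f a b
      = ∑ a, ∑ b, #{A : Finset N | a ∈ A ∧ b ∉ A} • f a b := by
    calc ∑ A : Finset N, ∑ a ∈ A, ∑ b ∈ Aᶜ, f a b
        = ∑ A : Finset N, ∑ a, ∑ b, if a ∈ A ∧ b ∉ A then f a b else 0 := by
          simp_rw [sum_mem_sum_compl_eq_sum_sum_ite]
      _ = ∑ a, ∑ b, ∑ A : Finset N, if a ∈ A ∧ b ∉ A then f a b else 0 := by
          rw [sum_comm]
          exact sum_congr rfl fun _ _ => sum_comm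
      _ = ∑ a, ∑ b, #{A : Finset N | a ∈ A ∧ b ∉ A} • f a b := by
          simp_rw [← sum_filter, sum_const]
  rw [hcount, smul_sum, smul_sum]
  refine sum_congr rfl fun a _ => ?_
  rw [smul_sum, smul_sum]
  refine sum_congr rfl fun b _ => ?_
  obtain rfl | hab := eq_or_ne a b
  · simp [hf]
  · rw [smul_smul, four_mul_card_filter_mem_notMem hab]

end Cuts

section Gram

variable {M R : Type*} [Fintype M]

lemma star_dotProduct_indicator_compl [Semiring R] [StarRing R] (s : Set N) (x : N → R) :
    star (s.indicator x) ⬝ᵥ sᶜ.indicator x = 0 :=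
  sum_eq_zero fun i _ => by by_cases hi : i ∈ s <;> simp [hi]

lemma star_mulVec_dotProduct_mulVec [Semiring R] [StarRing R] (Φ : Matrix M N R) (u v : N → R) :
    star (Φ *ᵥ u) ⬝ᵥ Φ *ᵥ v = star u ⬝ᵥ (Φᴴ * Φ) *ᵥ v := by
  rw [star_mulVec, ← dotProduct_mulVec, mulVec_mulVec]

lemma star_dotProduct_conjTranspose_mul_self_sub_one_mulVec [Ring R] [StarRing R] [DecidableEq N]
    (Φ : Matrix M N R) (u v : N → R) :
    star u ⬝ᵥ (Φᴴ * Φ - 1) *ᵥ v = star (Φ *ᵥ u) ⬝ᵥ Φ *ᵥ v - star u ⬝ᵥ v := by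
  rw [star_mulVec_dotProduct_mulVec, sub_mulVec, one_mulVec, dotProduct_sub]

lemma four_mul_sum_star_indicator_dotProduct_mulVec_indicator_compl [Semiring R] [StarRing R]
    (H : Matrix N N R) (hH : ∀ a, H a a = 0) (x : N → R) :
    4 * ∑ A : Finset N, star ((A : Set N).indicator x) ⬝ᵥ H *ᵥ (A : Set N)ᶜ.indicator x
      = 2 ^ Fintype.card N * (star x ⬝ᵥ H *ᵥ x) := by
  classical
  have hcut (A : Finset N) : star ((A : Set N).indicator x) ⬝ᵥ H *ᵥ (A : Set N)ᶜ.indicator x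
      = ∑ a ∈ A, ∑ b ∈ Aᶜ, star (x a) * H a b * x b := by
    rw [sum_mem_sum_compl_eq_sum_sum_ite, dot_mulVec_eq_sum_sum, sum_comm]
    refine sum_congr rfl fun a _ => sum_congr rfl fun b _ => ?_
    by_cases ha : a ∈ A <;> by_cases hb : b ∈ A <;> simp [ha, hb]
  have := four_nsmul_sum_sum_mem_sum_compl (fun a b => star (x a) * H a b * x b)
    (fun a => by simp [hH])
  simp only [nsmul_eq_mul, Nat.cast_pow, Nat.cast_ofNat] at this
  rw [dot_mulVec_eq_sum_sum, sum_comm]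
  simp only [Pi.star_apply, hcut, this]

end Gram

lemma norm_star_dotProduct_mulVec_le_of_cut_le (H : Matrix N N ℂ)
    (hH : ∀ a, H a a = 0) (x : N → ℂ) {θ : ℝ} (hθ : 0 ≤ θ)
    (hcut : ∀ A : Finset N, ‖star ((A : Set N).indicator x) ⬝ᵥ H *ᵥ (A : Set N)ᶜ.indicator x‖
      ≤ θ * √(norm2sq ((A : Set N).indicator x)) * √(norm2sq ((A : Set N)ᶜ.indicator x))) :
    ‖star x ⬝ᵥ H *ᵥ x‖ ≤ 2 * θ * norm2sq x := by
  have hterm (A : Finset N) :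
      ‖star ((A : Set N).indicator x) ⬝ᵥ H *ᵥ (A : Set N)ᶜ.indicator x‖ ≤ θ * norm2sq x / 2 := by
    have hsplit := norm2sq_indicator_add_compl (A : Set N) x
    set p := norm2sq ((A : Set N).indicator x)
    set q := norm2sq ((A : Set N)ᶜ.indicator x)
    calc _ ≤ θ * √p * √q := hcut A
      _ = θ * (2 * √p * √q) / 2 := by ring
      _ ≤ θ * (√p ^ 2 + √q ^ 2) / 2 := by gcongr; exact two_mul_le_add_sq _ _
      _ = θ * norm2sq x / 2 := by
          rw [Real.sq_sqrt (norm2sq_nonneg _), Real.sq_sqrt (norm2sq_nonneg _), hsplit]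
  refine le_of_mul_le_mul_left ?_ (by positivity : (0 : ℝ) < 2 ^ Fintype.card N)
  calc 2 ^ Fintype.card N * ‖star x ⬝ᵥ H *ᵥ x‖
      = 4 * ‖∑ A : Finset N, star ((A : Set N).indicator x) ⬝ᵥ H *ᵥ (A : Set N)ᶜ.indicator x‖ := by
        have := congrArg norm (four_mul_sum_star_indicator_dotProduct_mulVec_indicator_compl H hH x)
        simpa using this.symm
    _ ≤ 4 * ∑ _A : Finset N, θ * norm2sq x / 2 := by
        gcongr
        exact (norm_sum_le _ _).trans (sum_le_sum fun A _ => hterm A)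
    _ = 2 ^ Fintype.card N * (2 * θ * norm2sq x) := by
        rw [sum_const, card_univ, Fintype.card_finset, nsmul_eq_mul]
        push_cast
        ring

end

theorem restricted_orthogonality_implies_RIP_general {M N : Type*} [Fintype M] [Fintype N]
    (Φ : Matrix M N ℂ) (k : ℕ) (θ : ℝ) (hθ : 0 ≤ θ)
    (hcol : ∀ j : N, ∑ i, ‖Φ i j‖ ^ 2 = 1)
    (hro : RestrictedOrthogonality Φ k θ) :
    RIP Φ k (2 * θ) := by
  classical
  set H : Matrix N N ℂ := Φᴴ * Φ - 1
  have hdiag (j : N) : H j j = 0 := by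
    simp [H, conjTranspose_mul_self_apply_self, norm2sq, hcol]
  have hform (u v : N → ℂ) : star u ⬝ᵥ H *ᵥ v = star (Φ *ᵥ u) ⬝ᵥ Φ *ᵥ v - star u ⬝ᵥ v :=
    star_dotProduct_conjTranspose_mul_self_sub_one_mulVec Φ u v
  intro x hx
  have hcut (A : Finset N) :
      ‖star ((A : Set N).indicator x) ⬝ᵥ H *ᵥ (A : Set N)ᶜ.indicator x‖
        ≤ θ * √(norm2sq ((A : Set N).indicator x)) * √(norm2sq ((A : Set N)ᶜ.indicator x)) := by
    rw [hform, star_dotProduct_indicator_compl, sub_zero]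
    exact hro _ _ ((norm0_indicator_le _ x).trans hx) ((norm0_indicator_le _ x).trans hx)
      fun i => by by_cases hi : i ∈ A <;> simp [hi]
  have hbound := norm_star_dotProduct_mulVec_le_of_cut_le H hdiag x hθ hcut
  rw [hform, ← ofReal_norm2sq, ← ofReal_norm2sq, ← Complex.ofReal_sub, Complex.norm_real,
    Real.norm_eq_abs, abs_le] at hbound
  constructor <;> linarith [hbound.1, hbound.2]

/-- Restricted orthogonality plus unit-norm columns implies the restricted isometry
property with `δ = 2θ`. -/
theorem restricted_orthogonality_implies_RIP {M N : Type*} [Fintype M] [Fintype N]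
    (Φ : Matrix M N ℂ) (k : ℕ) (θ : ℝ) (hk : 1 ≤ k) (hθ : 0 ≤ θ)
    (hcol : ∀ j : N, ∑ i, ‖Φ i j‖ ^ 2 = 1)
    (hro : RestrictedOrthogonality Φ k θ) :
    RIP Φ k (2 * θ) :=
  restricted_orthogonality_implies_RIP_general Φ k θ hθ hcol hro
end

section
/- Let n ≥ 3, let F : ℂ^(ZMod n) → ℂ^(ZMod n) be the unitary discrete Fourier transform, and let x ∈ ℂ^(ZMod n) be the discrete Gaussian. Then ns(x)·ns(Fx) ≤ (√n + 1)⁴ / (√(n/2) − 1)². (In particular, ns(x)·ns(Fx) ≤ (2 + o(1))·n as n → ∞.) -/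
/-!
By Poisson summation the discrete Gaussian, the `n`-periodization of `m ↦ exp(-π m² / n)`, is fixed
by the unitary DFT, so `ns(Fx) = ns(x)`. Summing over `ZMod n` unfolds the periodization:
`‖x‖₁ = Σ_{m ∈ ℤ} exp(-π m² / n)`, and `‖x‖₂² ≥ Σ_{m ∈ ℤ} exp(-2π m² / n)` because the square of a
sum of nonnegative terms dominates the sum of their squares. An even function decreasing on
`[0, ∞)` has a sum over `ℤ` within `f 0` of its integral, so the theta sum `Σ_{m ∈ ℤ} exp(-c m²)` is
within `1` of `√(π / c)`; this gives `‖x‖₁ ≤ √n + 1` and `‖x‖₂² ≥ √(n / 2) - 1`.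
-/

open scoped BigOperators

/-- The discrete Gaussian `x[j] = Σ_{j'∈ℤ} exp(−nπ(j/n + j')²)`. -/
noncomputable def discreteGaussian (n : ℕ) [NeZero n] : ZMod n → ℂ := fun j =>
  ∑' j' : ℤ, (Real.exp (-(n : ℝ) * Real.pi * ((j.val : ℝ) / (n : ℝ) + (j' : ℝ)) ^ 2) : ℂ)

open Real Complex MeasureTheory Set

section IntegralTest

variable {f : ℝ → ℝ}

lemma tsum_int_eq_two_mul_tsum_nat_sub_of_even (heven : ∀ x, f (-x) = f x)
    (hf : Summable fun m : ℤ ↦ f m) :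
    ∑' m : ℤ, f m = 2 * ∑' n : ℕ, f n - f 0 := by
  have h := tsum_nat_add_neg hf
  simp only [Int.cast_natCast, Int.cast_neg, heven, Int.cast_zero, ← two_mul, tsum_mul_left] at h
  linarith

lemma summable_int_of_even_of_antitoneOn (heven : ∀ x, f (-x) = f x)
    (anti : AntitoneOn f (Ici 0)) (integrable : IntegrableOn f (Ioi 0))
    (nonneg : ∀ t ∈ Ioi 0, 0 ≤ f t) :
    Summable fun m : ℤ ↦ f m := by
  have h := anti.summable_of_integrableOn_Ioi_zero integrable nonneg
  refine summable_int_iff_summable_nat_and_neg.mpr ⟨h, ?_⟩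
  simpa only [Int.cast_neg, Int.cast_natCast, heven] using h

lemma abs_tsum_int_sub_two_mul_integral_le (heven : ∀ x, f (-x) = f x)
    (anti : AntitoneOn f (Ici 0)) (integrable : IntegrableOn f (Ioi 0))
    (nonneg : ∀ t ∈ Ioi 0, 0 ≤ f t) :
    |∑' m : ℤ, f m - 2 * ∫ x in Ioi 0, f x| ≤ f 0 := by
  have upper := anti.tsum_le_integral integrable nonneg
  have lower := anti.integral_le_tsum (anti.summable_of_integrableOn_Ioi_zero integrable nonneg)
    nonneg
  rw [tsum_int_eq_two_mul_tsum_nat_sub_of_even heven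
    (summable_int_of_even_of_antitoneOn heven anti integrable nonneg), abs_le]
  constructor <;> linarith

end IntegralTest

lemma antitoneOn_exp_neg_mul_sq {c : ℝ} (hc : 0 ≤ c) :
    AntitoneOn (fun x : ℝ ↦ rexp (-c * x ^ 2)) (Ici 0) := by
  intro a ha b _ hab
  simp only [exp_le_exp, neg_mul, neg_le_neg_iff]
  gcongr

lemma summable_int_exp_neg_mul_sq {c : ℝ} (hc : 0 < c) :
    Summable fun m : ℤ ↦ rexp (-c * m ^ 2) :=
  summable_int_of_even_of_antitoneOn (f := fun x ↦ rexp (-c * x ^ 2)) (by simp)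
    (antitoneOn_exp_neg_mul_sq hc.le) (integrable_exp_neg_mul_sq hc).integrableOn
    (fun _ _ ↦ (exp_pos _).le)

lemma abs_tsum_int_exp_neg_mul_sq_sub_le {c : ℝ} (hc : 0 < c) :
    |∑' m : ℤ, rexp (-c * m ^ 2) - √(π / c)| ≤ 1 := by
  have h := abs_tsum_int_sub_two_mul_integral_le (f := fun x ↦ rexp (-c * x ^ 2)) (by simp)
    (antitoneOn_exp_neg_mul_sq hc.le) (integrable_exp_neg_mul_sq hc).integrableOn
    (fun _ _ ↦ (exp_pos _).le)
  rwa [integral_gaussian_Ioi, mul_div_cancel₀ _ two_ne_zero, zero_pow two_ne_zero, mul_zero,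
    Real.exp_zero] at h

lemma tsum_int_gaussian_mul_cexp {t : ℝ} (ht : 0 < t) (ξ : ℝ) :
    ∑' m : ℤ, (rexp (-(π / t) * m ^ 2) : ℂ) * cexp (-(2 * π * I * m * ξ) / t) =
      √t * ∑' m : ℤ, (rexp (-t * π * (ξ / t + m) ^ 2) : ℂ) := by
  have ha : 0 < ((t⁻¹ : ℝ) : ℂ).re := by simpa using ht
  have hroot : ((t⁻¹ : ℝ) : ℂ) ^ (1 / 2 : ℂ) = ((√t)⁻¹ : ℝ) := by
    rw [← Real.sqrt_inv, Real.sqrt_eq_rpow, ofReal_cpow (inv_nonneg.mpr ht.le)]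
    norm_num
  have h := Complex.tsum_exp_neg_quadratic ha (-(ξ / t : ℝ) * I)
  rw [hroot, one_div, ← ofReal_inv, inv_inv] at h
  have hI : I * (-(ξ / t : ℝ) * I) = (ξ / t : ℝ) := by
    rw [← mul_assoc, mul_comm I, mul_assoc, I_mul_I]
    ring
  convert h using 1
  · refine tsum_congr fun m ↦ ?_
    rw [ofReal_exp, ← Complex.exp_add]
    congr 1
    push_cast
    field_simp
  · congr 1
    refine tsum_congr fun m ↦ ?_
    rw [ofReal_exp, hI]
    congr 1
    push_cast
    field_simp
    ring

section Periodization

variable (n : ℕ) [NeZero n]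

def zmodProdIntEquiv : ZMod n × ℤ ≃ ℤ where
  toFun p := (p.1.val : ℤ) + n * p.2
  invFun m := ((m : ZMod n), (m - ((m : ZMod n).val : ℤ)) / n)
  left_inv := by
    rintro ⟨j, j'⟩
    have hn : (n : ℤ) ≠ 0 := by exact_mod_cast NeZero.ne n
    have hj : (((j.val : ℤ) + n * j' : ℤ) : ZMod n) = j := by simp
    simp only [hj, add_sub_cancel_left, Int.mul_ediv_cancel_left _ hn]
  right_inv m := by
    have hdvd : (n : ℤ) ∣ m - ((m : ZMod n).val : ℤ) := by
      rw [← ZMod.intCast_zmod_eq_zero_iff_dvd]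
      simp
    simp only [Int.mul_ediv_cancel' hdvd, add_sub_cancel]

variable {n}

lemma Summable.comp_val_add_mul {α : Type*} [NormedAddCommGroup α] [CompleteSpace α] {f : ℤ → α}
    (hf : Summable f) (j : ZMod n) : Summable fun j' : ℤ ↦ f (j.val + n * j') :=
  hf.comp_injective <| (add_right_injective _).comp <|
    mul_right_injective₀ (by exact_mod_cast NeZero.ne n)

lemma sum_zmod_tsum_int_val_add_mul {α : Type*} [AddCommGroup α] [UniformSpace α]
    [IsUniformAddGroup α] [CompleteSpace α] [T2Space α] {f : ℤ → α} (hf : Summable f) :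
    ∑ j : ZMod n, ∑' j' : ℤ, f (j.val + n * j') = ∑' m : ℤ, f m := by
  have hsum : Summable fun p ↦ f (zmodProdIntEquiv n p) := (zmodProdIntEquiv n).summable_iff.mpr hf
  rw [← (zmodProdIntEquiv n).tsum_eq f, hsum.tsum_prod, tsum_fintype]
  rfl

end Periodization

lemma tsum_sq_le_sq_tsum {ι : Type*} {f : ι → ℝ} (hf : Summable f) (h0 : ∀ i, 0 ≤ f i) :
    ∑' i, f i ^ 2 ≤ (∑' i, f i) ^ 2 := by
  have hle (i : ι) : f i ^ 2 ≤ f i * ∑' i, f i := by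
    rw [sq]
    exact mul_le_mul_of_nonneg_left (hf.le_tsum i fun j _ ↦ h0 j) (h0 i)
  have hsq : Summable fun i ↦ f i ^ 2 := .of_nonneg_of_le (fun i ↦ sq_nonneg _) hle (hf.mul_right _)
  calc ∑' i, f i ^ 2 ≤ ∑' i, f i * ∑' i, f i := hsq.tsum_mono (hf.mul_right _) hle
    _ = (∑' i, f i) ^ 2 := by rw [tsum_mul_right, sq]

lemma ns_nonneg {N : Type*} [Fintype N] (x : N → ℂ) : 0 ≤ ns x :=
  div_nonneg (sq_nonneg _) (Finset.sum_nonneg fun _ _ ↦ sq_nonneg _)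

lemma ns_le_of_norm1_le_of_le_norm2sq {N : Type*} [Fintype N] {x : N → ℂ} {A B : ℝ}
    (hA : norm1 x ≤ A) (hB : 0 < B) (hBx : B ≤ norm2sq x) : ns x ≤ A ^ 2 / B :=
  div_le_div₀ (sq_nonneg A)
    (pow_le_pow_left₀ (Finset.sum_nonneg fun _ _ ↦ norm_nonneg _) hA 2) hB hBx

section DiscreteGaussian

variable (n : ℕ) [NeZero n]

lemma discreteGaussian_summand_eq (j : ZMod n) (j' : ℤ) :
    rexp (-(n : ℝ) * π * ((j.val : ℝ) / n + j') ^ 2) =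
      rexp (-(π / n) * ((j.val + n * j' : ℤ) : ℝ) ^ 2) := by
  have hn : (n : ℝ) ≠ 0 := by exact_mod_cast NeZero.ne n
  congr 1
  push_cast
  field_simp

lemma norm_discreteGaussian (j : ZMod n) :
    ‖discreteGaussian n j‖ = ∑' j' : ℤ, rexp (-(π / n) * ((j.val + n * j' : ℤ) : ℝ) ^ 2) := by
  simp only [discreteGaussian, discreteGaussian_summand_eq, ← ofReal_tsum, norm_real,
    Real.norm_of_nonneg (tsum_nonneg fun _ ↦ (exp_pos _).le)]

lemma norm1_discreteGaussian :
    norm1 (discreteGaussian n) = ∑' m : ℤ, rexp (-(π / n) * m ^ 2) := by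
  have hn : (0 : ℝ) < n := Nat.cast_pos.mpr (NeZero.pos n)
  simp only [norm1, norm_discreteGaussian]
  exact sum_zmod_tsum_int_val_add_mul (summable_int_exp_neg_mul_sq (by positivity))

lemma tsum_int_exp_le_norm2sq_discreteGaussian :
    ∑' m : ℤ, rexp (-(2 * π / n) * m ^ 2) ≤ norm2sq (discreteGaussian n) := by
  have hn : (0 : ℝ) < n := Nat.cast_pos.mpr (NeZero.pos n)
  rw [← sum_zmod_tsum_int_val_add_mul (n := n) (summable_int_exp_neg_mul_sq (by positivity))]
  refine Finset.sum_le_sum fun j _ ↦ ?_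
  have hsq (m : ℝ) : rexp (-(2 * π / n) * m ^ 2) = rexp (-(π / n) * m ^ 2) ^ 2 := by
    rw [← Real.exp_nat_mul]
    ring_nf
  simp only [hsq, norm_discreteGaussian]
  exact tsum_sq_le_sq_tsum ((summable_int_exp_neg_mul_sq (by positivity)).comp_val_add_mul j)
    fun _ ↦ (exp_pos _).le

lemma norm1_discreteGaussian_le : norm1 (discreteGaussian n) ≤ √n + 1 := by
  have hn : (0 : ℝ) < n := Nat.cast_pos.mpr (NeZero.pos n)
  have h := abs_tsum_int_exp_neg_mul_sq_sub_le (div_pos pi_pos hn)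
  rw [div_div_cancel₀ pi_ne_zero] at h
  rw [norm1_discreteGaussian]
  linarith [(abs_le.mp h).2]

lemma sqrt_half_sub_one_le_norm2sq_discreteGaussian :
    √((n : ℝ) / 2) - 1 ≤ norm2sq (discreteGaussian n) := by
  have hn : (0 : ℝ) < n := Nat.cast_pos.mpr (NeZero.pos n)
  have h := abs_tsum_int_exp_neg_mul_sq_sub_le (c := 2 * π / n) (by positivity)
  rw [show π / (2 * π / n) = n / 2 by field_simp] at h
  linarith [(abs_le.mp h).1, tsum_int_exp_le_norm2sq_discreteGaussian n]

lemma discreteGaussian_mul_cexp (j k : ZMod n) :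
    discreteGaussian n j * cexp (-(2 * π * I * j.val * k.val) / n) =
      ∑' j' : ℤ, (rexp (-(π / n) * ((j.val + n * j' : ℤ) : ℝ) ^ 2) : ℂ) *
        cexp (-(2 * π * I * ((j.val + n * j' : ℤ) : ℂ) * k.val) / n) := by
  have hn : (n : ℂ) ≠ 0 := by exact_mod_cast NeZero.ne n
  rw [discreteGaussian, ← tsum_mul_right]
  refine tsum_congr fun j' ↦ ?_
  have hshift : -(2 * π * I * ((j.val + n * j' : ℤ) : ℂ) * k.val) / n =
      -(2 * π * I * j.val * k.val) / n + (-(j' * k.val) : ℤ) * (2 * π * I) := by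
    push_cast
    field_simp
    ring
  rw [discreteGaussian_summand_eq, hshift, Complex.exp_add, exp_int_mul_two_pi_mul_I, mul_one]

lemma summable_gaussian_mul_cexp (k : ZMod n) :
    Summable fun m : ℤ ↦ (rexp (-(π / n) * m ^ 2) : ℂ) * cexp (-(2 * π * I * m * k.val) / n) := by
  have hn : (0 : ℝ) < n := Nat.cast_pos.mpr (NeZero.pos n)
  have hphase (m : ℤ) : ‖cexp (-(2 * π * I * m * k.val) / n)‖ = 1 := by
    rw [show -(2 * π * I * m * k.val) / n = ((-(2 * π * m * k.val / n) : ℝ) : ℂ) * I by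
      push_cast; ring, norm_exp_ofReal_mul_I]
  refine .of_norm ?_
  simpa only [norm_mul, hphase, mul_one, norm_real, Real.norm_of_nonneg (exp_pos _).le] using
    summable_int_exp_neg_mul_sq (div_pos pi_pos hn)

lemma dft_discreteGaussian : dft n (discreteGaussian n) = discreteGaussian n := by
  have hn : (0 : ℝ) < n := Nat.cast_pos.mpr (NeZero.pos n)
  funext k
  have poisson := tsum_int_gaussian_mul_cexp hn k.val
  simp only [ofReal_natCast] at poisson
  rw [dft, Finset.sum_congr rfl fun j _ ↦ discreteGaussian_mul_cexp n j k,
    sum_zmod_tsum_int_val_add_mul (summable_gaussian_mul_cexp n k), poisson, discreteGaussian,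
    ← mul_assoc, ← ofReal_mul, one_div_mul_cancel (Real.sqrt_pos.mpr hn).ne', ofReal_one, one_mul]

end DiscreteGaussian

/-- The discrete Gaussian achieves near equality in the multiplicative uncertainty
principle: `ns(x)·ns(Fx) ≤ (√n + 1)⁴ / (√(n/2) − 1)²` (which is `(2 + o(1))·n`). -/
theorem discreteGaussian_near_equality (n : ℕ) [NeZero n] (hn : 3 ≤ n) :
    ns (discreteGaussian n) * ns (dft n (discreteGaussian n)) ≤
      (Real.sqrt n + 1) ^ 4 / (Real.sqrt ((n : ℝ) / 2) - 1) ^ 2 := by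
  have hB : 0 < √((n : ℝ) / 2) - 1 := by
    have : (3 : ℝ) ≤ n := by exact_mod_cast hn
    rw [sub_pos, Real.lt_sqrt zero_le_one]
    linarith
  have hns : ns (discreteGaussian n) ≤ (√n + 1) ^ 2 / (√((n : ℝ) / 2) - 1) :=
    ns_le_of_norm1_le_of_le_norm2sq (norm1_discreteGaussian_le n) hB
      (sqrt_half_sub_one_le_norm2sq_discreteGaussian n)
  rw [dft_discreteGaussian, ← sq, show (4 : ℕ) = 2 * 2 from rfl, pow_mul, ← div_pow]
  exact pow_le_pow_left₀ (ns_nonneg _) hns 2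
end

section
/- Let n ≥ 1, let f : ℝ → ℂ be a Schwartz function, and define x ∈ ℂ^(ZMod n) by x[j] := Σ_{j'∈ℤ} f(j/n + j') for any integer representative j of the residue (the value is independent of the representative). Then the unitary discrete Fourier transform of x satisfies (Fx)[k] = √n · Σ_{k'∈ℤ} f̂(k + k'·n) for every k ∈ ZMod n (any integer representative k), where f̂(ξ) := ∫_ℝ f(t)·e^(−2πi·tξ) dt is the Fourier transform of f. -/
open scoped BigOperators

open scoped FourierTransform

/-! Poisson summation writes the samples `x j` as the Fourier series `∑ m, 𝓕 f m · e(m j / n)`.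
Each sampled character `j ↦ e(m j / n)` depends only on `m mod n`, and by orthogonality of the
characters of `ZMod n` its unitary DFT at `k` is `√n` if `m ≡ k` and `0` otherwise; so `(F x) k`
collects the aliased frequencies `m = k + k' n`. -/

open Complex
open ZMod (stdAddChar)

lemma SchwartzMap.summable_intCast {E : Type*} [NormedAddCommGroup E] [NormedSpace ℝ E]
    [CompleteSpace E] (f : SchwartzMap ℝ E) : Summable fun m : ℤ => f m :=
  summable_of_isBigO (Real.summable_abs_int_rpow one_lt_two)
    ((f.isBigO_cocompact_rpow (-2)).comp_tendsto Int.tendsto_coe_cofinite)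

section Aliasing

variable {n : ℕ} [NeZero n]

lemma fourier_val_div_eq_stdAddChar (m : ℤ) (j : ZMod n) :
    fourier m (((j.val : ℝ) / n : ℝ) : UnitAddCircle) = stdAddChar (j * (m : ZMod n)) := by
  have := ZMod.stdAddChar_coe (N := n) (j.val * m)
  push_cast [ZMod.natCast_zmod_val] at this
  rw [this, fourier_coe_apply]
  push_cast
  ring_nf

lemma exp_neg_val_mul_val_div_eq_stdAddChar (j k : ZMod n) :
    exp (-(2 * (Real.pi : ℂ) * I * (j.val : ℂ) * (k.val : ℂ)) / n) = stdAddChar (-(j * k)) := by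
  have := ZMod.stdAddChar_coe (N := n) (-(j.val * k.val : ℤ))
  push_cast [ZMod.natCast_zmod_val] at this
  rw [this]
  ring_nf

lemma dft_eq_sum_stdAddChar (x : ZMod n → ℂ) (k : ZMod n) :
    dft n x k = (Real.sqrt n : ℂ)⁻¹ * ∑ j, x j * stdAddChar (-(j * k)) := by
  simp only [dft, exp_neg_val_mul_val_div_eq_stdAddChar, one_div, ofReal_inv]

lemma sum_stdAddChar_mul_stdAddChar_neg (a k : ZMod n) :
    ∑ j : ZMod n, stdAddChar (j * a) * stdAddChar (-(j * k)) = if a = k then (n : ℂ) else 0 := by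
  classical
  simp_rw [← AddChar.map_add_eq_mul, ← sub_eq_add_neg, ← mul_sub,
    AddChar.sum_mulShift _ (ZMod.isPrimitive_stdAddChar n), sub_eq_zero, ZMod.card, Nat.cast_ite,
    Nat.cast_zero]

lemma tsum_ite_intCast_eq_tsum_add_mul {α : Type*} [AddCommMonoid α] [TopologicalSpace α]
    (g : ℤ → α) (k : ZMod n) :
    ∑' m : ℤ, (if (m : ZMod n) = k then g m else 0) = ∑' k' : ℤ, g (k.val + k' * n) := by
  have hinj : Function.Injective fun k' : ℤ => (k.val : ℤ) + k' * n := fun a b hab =>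
    mul_right_cancel₀ (Int.natCast_ne_zero.mpr (NeZero.ne n)) (add_left_cancel hab)
  have hsupp : Function.support (fun m : ℤ => if (m : ZMod n) = k then g m else 0) ⊆
      Set.range fun k' : ℤ => (k.val : ℤ) + k' * n := by
    intro m hm
    have hmk : (m : ZMod n) = ((k.val : ℤ) : ZMod n) := by
      by_contra h
      simp_all
    obtain ⟨d, hd⟩ := (ZMod.intCast_eq_intCast_iff_dvd_sub _ _ _).mp hmk.symm
    exact ⟨d, by linear_combination -hd⟩
  rw [← hinj.tsum_eq hsupp]
  simp

theorem dft_eq_sqrt_mul_tsum_of_eq_tsum_stdAddChar {a : ℤ → ℂ} (ha : Summable a)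
    {x : ZMod n → ℂ} (hx : ∀ j, x j = ∑' m : ℤ, a m * stdAddChar (j * (m : ZMod n)))
    (k : ZMod n) :
    dft n x k = Real.sqrt n * ∑' k' : ℤ, a (k.val + k' * n) := by
  have hsum (j : ZMod n) : Summable fun m : ℤ =>
      a m * stdAddChar (j * (m : ZMod n)) * stdAddChar (-(j * k)) :=
    ha.norm.of_norm_bounded fun m => by simp [AddChar.norm_apply]
  have hsqrt : (Real.sqrt n : ℂ) * Real.sqrt n = n := by
    exact_mod_cast Real.mul_self_sqrt (Nat.cast_nonneg n)
  calc dft n x k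
      = (Real.sqrt n : ℂ)⁻¹ * ∑' m : ℤ,
          a m * ∑ j : ZMod n, stdAddChar (j * (m : ZMod n)) * stdAddChar (-(j * k)) := by
        simp_rw [dft_eq_sum_stdAddChar, hx, ← tsum_mul_right,
          ← Summable.tsum_finsetSum fun j _ => hsum j, Finset.mul_sum, mul_assoc]
    _ = (Real.sqrt n : ℂ)⁻¹ * ∑' m : ℤ, n * (if (m : ZMod n) = k then a m else 0) := by
        simp_rw [sum_stdAddChar_mul_stdAddChar_neg, mul_ite, mul_zero, mul_comm (a _)]
    _ = Real.sqrt n * ∑' k' : ℤ, a (k.val + k' * n) := by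
        rw [tsum_mul_left, tsum_ite_intCast_eq_tsum_add_mul, ← hsqrt, ← mul_assoc,
          inv_mul_cancel_left₀]
        exact_mod_cast (Real.sqrt_pos.mpr (Nat.cast_pos.mpr (Nat.pos_of_neZero n))).ne'

end Aliasing

/-- Poisson-summation type lemma: if `x` is obtained by periodizing and sampling a
Schwartz function `f`, then `(Fx)[k] = √n · Σ_{k'∈ℤ} f̂(k + k'n)`. -/
theorem dft_of_periodized_schwartz (n : ℕ) [NeZero n] (f : SchwartzMap ℝ ℂ)
    (x : ZMod n → ℂ) (hxf : ∀ j : ZMod n, x j = ∑' j' : ℤ, f ((j.val : ℝ) / (n : ℝ) + (j' : ℝ)))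
    (k : ZMod n) :
    dft n x k = Real.sqrt n * ∑' k' : ℤ, 𝓕 (fun t : ℝ => f t) ((k.val : ℝ) + (k' : ℝ) * n) := by
  have hx (j : ZMod n) : x j = ∑' m : ℤ, 𝓕 f m * stdAddChar (j * (m : ZMod n)) := by
    simp_rw [hxf, SchwartzMap.tsum_eq_tsum_fourier, fourier_val_div_eq_stdAddChar]
  simpa [SchwartzMap.fourier_coe] using
    dft_eq_sqrt_mul_tsum_of_eq_tsum_stdAddChar (SchwartzMap.summable_intCast (𝓕 f)) hx k
end

section
/- Let k, n, m be positive integers with k dividing n, and let Φ be the random m×n partial Fourier matrix obtained by drawing m rows independently and uniformly from the rows of the n×n unitary discrete Fourier transform matrix. Then the probability that the nullspace of Φ contains a nonzero vector with at most k nonzero entries is at least k·(1 − 1/k)^m − (k(k−1)/2)·(1 − 2/k)^m. -/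
/-!
Fix a residue `a` modulo `k` and write `n = k d`. The Dirac comb on the multiples of `d`, modulated
by `ℓ ↦ e^{2πi a ℓ / n}`, has `k` nonzero entries, and the `r`-th row of the DFT matrix maps it to a
multiple of `∑_{t < k} ζ^{(a - r) t}` with `ζ = e^{2πi / k}`, which vanishes unless `r ≡ a (mod k)`.
So the comb lies in the nullspace of `Φ` as soon as no sampled row `j i` is congruent to `a`. This
event has probability `(1 - 1/k)^m`, two of them for `a ≠ b` occur together with probability
`(1 - 2/k)^m`, and the degree-two Bonferroni inequality bounds the probability of their union.
-/

open scoped BigOperators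

/-- The random partial Fourier matrix: row `i` is the `j i`-th row of the `n × n`
unitary DFT matrix. -/
noncomputable def partialFourier (n m : ℕ) (j : Fin m → ZMod n) : Matrix (Fin m) (ZMod n) ℂ :=
  Matrix.of fun i ℓ =>
    (1 / Real.sqrt n : ℝ) *
      Complex.exp (-(2 * (Real.pi : ℂ) * Complex.I * ((j i).val : ℂ) * (ℓ.val : ℂ)) / (n : ℂ))

open Finset Complex Real

lemma Finset.two_mul_sum_card_le_two_mul_card_add_sum_card_inter {ι α : Type*} [DecidableEq ι]
    [DecidableEq α] (s : Finset ι) (A : ι → Finset α) (U : Finset α) (hU : ∀ i ∈ s, A i ⊆ U) :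
    2 * ∑ i ∈ s, #(A i) ≤ 2 * #U + ∑ p ∈ s.offDiag, #(A p.1 ∩ A p.2) := by
  let owners : α → Finset ι := fun x => {i ∈ s | x ∈ A i}
  have h_sum : ∑ i ∈ s, #(A i) = ∑ x ∈ U, #(owners x) := calc
    _ = ∑ i ∈ s, #(U.bipartiteAbove (fun i x => x ∈ A i) i) := sum_congr rfl fun i hi => by
      rw [bipartiteAbove, filter_mem_eq_inter, inter_eq_right.2 (hU i hi)]
    _ = _ := sum_card_bipartiteAbove_eq_sum_card_bipartiteBelow _
  have h_pairs : ∑ p ∈ s.offDiag, #(A p.1 ∩ A p.2) = ∑ x ∈ U, #(owners x).offDiag := calc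
    _ = ∑ p ∈ s.offDiag, #(U.bipartiteAbove (fun p x => x ∈ A p.1 ∩ A p.2) p) :=
      sum_congr rfl fun p hp => by
        rw [bipartiteAbove, filter_mem_eq_inter,
          inter_eq_right.2 (inter_subset_left.trans (hU _ (mem_offDiag.1 hp).1))]
    _ = _ := by
      rw [sum_card_bipartiteAbove_eq_sum_card_bipartiteBelow]
      refine sum_congr rfl fun x _ => congrArg card ?_
      ext p
      simp only [bipartiteBelow, mem_filter, mem_offDiag, mem_inter, owners]
      tauto
  rw [h_sum, h_pairs, mul_sum, card_eq_sum_ones, mul_sum, ← sum_add_distrib]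
  refine sum_le_sum fun x _ => ?_
  rw [offDiag_card]
  -- `x` lies in `c` of the sets, and `2 c ≤ 2 + c (c - 1)` with equality at `c = 1, 2`
  rcases #(owners x) with _ | _ | c
  · simp
  · simp
  · nlinarith [Nat.sub_add_cancel (Nat.le_mul_self (c + 2))]

lemma AddMonoidHom.card_filter_mem_mul_card_eq {G H : Type*} [AddGroup G] [Fintype G] [AddGroup H]
    [Fintype H] [DecidableEq H] (f : G →+ H) (hf : Function.Surjective f) (S : Finset H) :
    #{g | f g ∈ S} * Fintype.card H = #S * Fintype.card G := by
  have h_fiber (y : H) : #{g | f g = y} = #{g | f g = 0} :=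
    AddMonoidHom.card_fiber_eq_of_mem_range f (hf y) (hf 0)
  have h_G : Fintype.card G = Fintype.card H * #{g | f g = 0} := by
    rw [← card_univ, card_eq_sum_card_fiberwise (t := univ) (f := f) fun _ _ => mem_univ _]
    simp [h_fiber]
  have h_S : #{g | f g ∈ S} = #S * #{g | f g = 0} := by
    rw [card_eq_sum_card_fiberwise (s := {g | f g ∈ S}) (t := S) (f := f)
      fun g hg => (mem_filter.1 hg).2]
    rw [sum_congr rfl fun y hy => ?_, sum_const, smul_eq_mul]
    rw [← h_fiber y, filter_filter]
    congr 1
    ext g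
    simp only [mem_filter, mem_univ, true_and]
    exact ⟨fun h => h.2, fun h => ⟨h ▸ hy, h⟩⟩
  rw [h_S, h_G]
  ring

lemma IsPrimitiveRoot.geom_sum_zpow_eq_zero {K : Type*} [Field K] {ζ : K} {k : ℕ}
    (hζ : IsPrimitiveRoot ζ k) {c : ℤ} (hc : ¬ (k : ℤ) ∣ c) :
    ∑ t ∈ range k, (ζ ^ c) ^ t = 0 := by
  refine eq_zero_of_ne_zero_of_mul_left_eq_zero
    (sub_ne_zero_of_ne (Ne.symm (mt (hζ.zpow_eq_one_iff_dvd c).1 hc))) ?_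
  rw [mul_neg_geom_sum, ← zpow_natCast, ← zpow_mul, mul_comm, zpow_mul, zpow_natCast,
    hζ.pow_eq_one, one_zpow, sub_self]

def residueAvoiding {n : ℕ} [NeZero n] {k : ℕ} (h : k ∣ n) (m : ℕ) (S : Finset (ZMod k)) :
    Finset (Fin m → ZMod n) :=
  Fintype.piFinset fun _ => {r | ZMod.castHom h (ZMod k) r ∉ S}

section
variable {n k : ℕ} [NeZero n] (h : k ∣ n) (m : ℕ)

@[simp]
lemma mem_residueAvoiding {S : Finset (ZMod k)} {j : Fin m → ZMod n} :
    j ∈ residueAvoiding h m S ↔ ∀ i, ZMod.castHom h (ZMod k) (j i) ∉ S := by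
  simp only [residueAvoiding, Fintype.mem_piFinset, mem_filter, mem_univ, true_and]

lemma residueAvoiding_inter (S S' : Finset (ZMod k)) :
    residueAvoiding h m S ∩ residueAvoiding h m S' = residueAvoiding h m (S ∪ S') := by
  ext j
  simp only [mem_inter, mem_residueAvoiding, mem_union, not_or, forall_and]

lemma card_residueAvoiding [NeZero k] (S : Finset (ZMod k)) :
    (#(residueAvoiding h m S) : ℝ) = ((n : ℝ) * (1 - #S / k)) ^ m := by
  let residue := ZMod.castHom h (ZMod k)
  have h_hit : (#{r | residue r ∈ S} : ℝ) * k = #S * n := by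
    have := residue.toAddMonoidHom.card_filter_mem_mul_card_eq (ZMod.castHom_surjective h) S
    rw [ZMod.card, ZMod.card] at this
    exact_mod_cast this
  have h_split : (#{r | residue r ∈ S} : ℝ) + #{r | residue r ∉ S} = n := by
    exact_mod_cast (card_filter_add_card_filter_not (fun r => residue r ∈ S)).trans
      (ZMod.card n)
  have hk : (k : ℝ) ≠ 0 := Nat.cast_ne_zero.2 (NeZero.ne k)
  rw [residueAvoiding, Fintype.card_piFinset_const, Nat.cast_pow]
  congr 1
  field_simp
  linear_combination k * h_split - h_hit

lemma le_card_of_residueAvoiding_subset [NeZero k] {T : Finset (Fin m → ZMod n)}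
    (hT : ∀ a, residueAvoiding h m {a} ⊆ T) :
    k * ((n : ℝ) * (1 - 1 / k)) ^ m - k * (k - 1) / 2 * ((n : ℝ) * (1 - 2 / k)) ^ m ≤ #T := by
  have h_bonf := (Nat.cast_le (α := ℝ)).2 <|
    two_mul_sum_card_le_two_mul_card_add_sum_card_inter univ _ T fun a _ => hT a
  have h_pairs (p : ZMod k × ZMod k) (hp : p ∈ univ.offDiag) :
      (#(residueAvoiding h m {p.1} ∩ residueAvoiding h m {p.2}) : ℝ) =
        ((n : ℝ) * (1 - 2 / k)) ^ m := by
    rw [residueAvoiding_inter, card_residueAvoiding,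
      card_union_of_disjoint (disjoint_singleton.2 (mem_offDiag.1 hp).2.2)]
    norm_num
  push_cast [sum_congr rfl h_pairs, card_residueAvoiding, card_singleton, sum_const, card_univ,
    ZMod.card, offDiag_card, nsmul_eq_mul, Nat.cast_sub (Nat.le_mul_self k)] at h_bonf
  linear_combination h_bonf / 2
end

def combSupport (k d : ℕ) : Finset (ZMod (k * d)) :=
  (range k).image fun t => ((t * d : ℕ) : ZMod (k * d))

noncomputable def modulatedComb (k d : ℕ) (a : ZMod k) : ZMod (k * d) → ℂ := fun ℓ =>
  if ℓ ∈ combSupport k d then exp (2 * π * I * a.val * ℓ.val / (k * d : ℕ)) else 0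

section
variable {k d : ℕ}

lemma ZMod.val_natCast_mul_of_lt [NeZero d] {t : ℕ} (ht : t < k) :
    ((t * d : ℕ) : ZMod (k * d)).val = t * d :=
  ZMod.val_cast_of_lt (Nat.mul_lt_mul_of_pos_right ht (Nat.pos_of_neZero d))

lemma modulatedComb_ne_zero [NeZero k] (a : ZMod k) : modulatedComb k d a ≠ 0 := by
  have h0 : (0 : ZMod (k * d)) ∈ combSupport k d :=
    mem_image.2 ⟨0, mem_range.2 (Nat.pos_of_neZero k), by simp⟩
  exact fun h => by simpa [modulatedComb, h0] using congrFun h 0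

lemma norm0_modulatedComb_le (a : ZMod k) : norm0 (modulatedComb k d a) ≤ k := by
  calc norm0 (modulatedComb k d a)
      ≤ Nat.card (combSupport k d) := Nat.card_mono (combSupport k d).finite_toSet fun ℓ hℓ => by
        by_contra h
        exact hℓ (if_neg h)
    _ ≤ k := by
      rw [Nat.card_eq_finsetCard]
      exact card_image_le.trans (card_range k).le

lemma partialFourier_mulVec_modulatedComb [NeZero k] [NeZero d] {m : ℕ}
    (j : Fin m → ZMod (k * d)) (a : ZMod k)
    (hj : ∀ i, ZMod.castHom (dvd_mul_right k d) (ZMod k) (j i) ≠ a) :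
    (partialFourier (k * d) m j).mulVec (modulatedComb k d a) = 0 := by
  funext i
  set c : ℤ := a.val - (j i).val
  have hc : ¬ (k : ℤ) ∣ c := by
    rw [← ZMod.intCast_zmod_eq_zero_iff_dvd]
    intro h0
    apply hj i
    push_cast [c, ZMod.natCast_zmod_val] at h0
    rw [ZMod.castHom_apply, ZMod.cast_eq_val, (sub_eq_zero.1 h0)]
  have h_term (t : ℕ) (ht : t ∈ range k) :
      partialFourier (k * d) m j i ((t * d : ℕ) : ZMod (k * d)) *
        modulatedComb k d a ((t * d : ℕ) : ZMod (k * d)) =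
      ((1 / √(k * d : ℕ) : ℝ) : ℂ) * (exp (2 * π * I / k) ^ c) ^ t := by
    have h_mem : ((t * d : ℕ) : ZMod (k * d)) ∈ combSupport k d := mem_image_of_mem _ ht
    rw [modulatedComb, if_pos h_mem, partialFourier, Matrix.of_apply,
      ZMod.val_natCast_mul_of_lt (mem_range.1 ht), mul_assoc, ← Complex.exp_add,
      ← Complex.exp_int_mul, ← Complex.exp_nat_mul]
    congr 2
    have hk : (k : ℂ) ≠ 0 := Nat.cast_ne_zero.2 (NeZero.ne k)
    have hd : (d : ℂ) ≠ 0 := Nat.cast_ne_zero.2 (NeZero.ne d)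
    push_cast [c]
    field_simp
    ring
  have h_inj : Set.InjOn (fun t : ℕ => ((t * d : ℕ) : ZMod (k * d))) (range k) :=
    fun t ht t' ht' h => Nat.eq_of_mul_eq_mul_right (Nat.pos_of_neZero d) <| by
      simpa only [ZMod.val_natCast_mul_of_lt (mem_range.1 ht),
        ZMod.val_natCast_mul_of_lt (mem_range.1 ht')] using congrArg ZMod.val h
  calc (partialFourier (k * d) m j).mulVec (modulatedComb k d a) i
      = ∑ ℓ ∈ combSupport k d, partialFourier (k * d) m j i ℓ * modulatedComb k d a ℓ :=
        (sum_subset (subset_univ _) fun ℓ _ hℓ => by simp [modulatedComb, hℓ]).symm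
    _ = ∑ t ∈ range k, ((1 / √(k * d : ℕ) : ℝ) : ℂ) * (exp (2 * π * I / k) ^ c) ^ t := by
        rw [combSupport, sum_image h_inj]
        exact sum_congr rfl h_term
    _ = 0 := by
        rw [← mul_sum, (isPrimitiveRoot_exp k (NeZero.ne k)).geom_sum_zpow_eq_zero hc, mul_zero]
end

theorem partial_fourier_nullspace_sparse_vector_lower_bound_general
    (n k m : ℕ) [NeZero n] (hkn : k ∣ n) :
    ((Nat.card {j : Fin m → ZMod n //
        ∃ x : ZMod n → ℂ, x ≠ 0 ∧ norm0 x ≤ k ∧ (partialFourier n m j).mulVec x = 0} : ℝ)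
      / (n : ℝ) ^ m)
      ≥ k * (1 - 1 / (k : ℝ)) ^ m - ((k : ℝ) * (k - 1) / 2) * (1 - 2 / (k : ℝ)) ^ m := by
  classical
  obtain ⟨d, rfl⟩ := hkn
  have : NeZero k := ⟨left_ne_zero_of_mul (NeZero.ne (k * d))⟩
  have : NeZero d := ⟨right_ne_zero_of_mul (NeZero.ne (k * d))⟩
  have h_count := le_card_of_residueAvoiding_subset (dvd_mul_right k d) m (T := {j |
      ∃ x : ZMod (k * d) → ℂ, x ≠ 0 ∧ norm0 x ≤ k ∧ (partialFourier (k * d) m j).mulVec x = 0})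
    fun a j hj => mem_filter.2 ⟨mem_univ j, modulatedComb k d a, modulatedComb_ne_zero a,
      norm0_modulatedComb_le a, partialFourier_mulVec_modulatedComb j a fun i => by
        simpa using (mem_residueAvoiding _ _).1 hj i⟩
  have h_pos : (0 : ℝ) < (k * d : ℕ) ^ m := pow_pos (Nat.cast_pos.2 (Nat.pos_of_neZero _)) m
  rw [Nat.card_eq_fintype_card, Fintype.card_subtype, ge_iff_le, le_div_iff₀ h_pos]
  rw [mul_pow, mul_pow] at h_count
  linear_combination h_count

/-- Bonferroni lower bound: if `k ∣ n`, the probability that the nullspace of a random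
`m × n` partial Fourier matrix (rows drawn independently and uniformly) contains a
nonzero `k`-sparse vector is at least `k(1 − 1/k)^m − (k(k−1)/2)(1 − 2/k)^m`. -/
theorem partial_fourier_nullspace_sparse_vector_lower_bound
    (n k m : ℕ) [NeZero n] (hn : 0 < n) (hk : 0 < k) (hm : 0 < m) (hkn : k ∣ n) :
    ((Nat.card {j : Fin m → ZMod n //
        ∃ x : ZMod n → ℂ, x ≠ 0 ∧ norm0 x ≤ k ∧ (partialFourier n m j).mulVec x = 0} : ℝ)
      / (n : ℝ) ^ m)
      ≥ k * (1 - 1 / (k : ℝ)) ^ m - ((k : ℝ) * (k - 1) / 2) * (1 - 2 / (k : ℝ)) ^ m :=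
  partial_fourier_nullspace_sparse_vector_lower_bound_general n k m hkn
end

section
/- Let x ∈ ℂ^N be nonzero and suppose equality holds in Hölder's inequality in the form ‖x‖₁·‖x‖_∞ = ‖x‖₂², where ‖x‖_∞ = maxᵢ|xᵢ|. Then every nonzero entry of x has modulus equal to ‖x‖_∞, and consequently ns(x) = ‖x‖₀. -/
open scoped BigOperators

/-- The inequality `fᵢ² ≤ fᵢ · max f` holds termwise, so equality of the sums is equality of
each term. -/
theorem Finset.eq_sup'_of_sum_mul_sup'_eq_sum_sq {ι : Type*} {s : Finset ι} (hs : s.Nonempty)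
    {f : ι → ℝ} (hf : ∀ i ∈ s, 0 ≤ f i)
    (heq : (∑ i ∈ s, f i) * s.sup' hs f = ∑ i ∈ s, f i ^ 2) {i : ι} (hi : i ∈ s)
    (hfi : f i ≠ 0) : f i = s.sup' hs f := by
  have hle : ∀ j ∈ s, f j ^ 2 ≤ f j * s.sup' hs f := fun j hj => by
    rw [sq]
    exact mul_le_mul_of_nonneg_left (s.le_sup' f hj) (hf j hj)
  have hsum : ∑ j ∈ s, f j ^ 2 = ∑ j ∈ s, f j * s.sup' hs f := by
    rw [← Finset.sum_mul, heq]
  have hfi_sq : f i ^ 2 = f i * s.sup' hs f := (Finset.sum_eq_sum_iff_of_le hle).mp hsum i hi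
  exact mul_left_cancel₀ hfi (by rw [← sq, hfi_sq])

theorem sum_norm_pow_eq_norm0_mul {N : Type*} [Fintype N] {x : N → ℂ} {c : ℝ}
    (hflat : ∀ i, x i ≠ 0 → ‖x i‖ = c) {k : ℕ} (hk : k ≠ 0) :
    ∑ i, ‖x i‖ ^ k = norm0 x * c ^ k := by
  classical
  have hsupp : ∑ i, ‖x i‖ ^ k = ∑ i with x i ≠ 0, ‖x i‖ ^ k := by
    refine (Finset.sum_filter_of_ne fun i _ hi => ?_).symm
    contrapose! hi
    simp [hi, hk]
  rw [hsupp, Finset.sum_congr rfl fun i hi => by rw [hflat i (Finset.mem_filter.mp hi).2],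
    Finset.sum_const, nsmul_eq_mul, norm0, Nat.card_eq_fintype_card, Fintype.card_subtype]

theorem ns_eq_norm0_of_norm_eq {N : Type*} [Fintype N] {x : N → ℂ} (hx : x ≠ 0) {c : ℝ}
    (hflat : ∀ i, x i ≠ 0 → ‖x i‖ = c) : ns x = norm0 x := by
  obtain ⟨i, hi⟩ := Function.ne_iff.mp hx
  have hc : c ≠ 0 := by rw [← hflat i hi]; exact norm_ne_zero_iff.mpr hi
  have hcard : (norm0 x : ℝ) ≠ 0 := by
    have : 0 < norm0 x := Nat.card_pos_iff.mpr ⟨⟨⟨i, hi⟩⟩, inferInstance⟩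
    positivity
  have h1 : norm1 x = norm0 x * c := by
    unfold norm1
    simpa using sum_norm_pow_eq_norm0_mul (k := 1) hflat one_ne_zero
  rw [ns, h1, norm2sq, sum_norm_pow_eq_norm0_mul hflat two_ne_zero]
  field_simp

/-- If equality holds in Hölder's inequality `‖x‖₁·‖x‖_∞ = ‖x‖₂²` for a nonzero `x`,
then all nonzero entries of `x` have modulus `‖x‖_∞`, and `ns(x) = ‖x‖₀`. -/
theorem holder_equality_flat {N : Type*} [Fintype N] [Nonempty N] (x : N → ℂ) (hx : x ≠ 0)
    (heq : norm1 x * (Finset.univ.sup' Finset.univ_nonempty fun i => ‖x i‖)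
      = norm2sq x) :
    (∀ i, x i ≠ 0 →
      ‖x i‖ = Finset.univ.sup' Finset.univ_nonempty fun i => ‖x i‖) ∧
    ns x = (norm0 x : ℝ) := by
  have hflat : ∀ i, x i ≠ 0 → ‖x i‖ = Finset.univ.sup' Finset.univ_nonempty fun i => ‖x i‖ :=
    fun i hi => Finset.eq_sup'_of_sum_mul_sup'_eq_sum_sq Finset.univ_nonempty
      (fun j _ => norm_nonneg (x j)) heq (Finset.mem_univ i) (norm_ne_zero_iff.mpr hi)
  exact ⟨hflat, ns_eq_norm0_of_norm_eq hx hflat⟩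
end
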